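/- For all i ∈ {1, 2, 3, 4} and j ∈ {1, 2, 3}, the third directional derivative of the Morley bubble φ_M^i along t_j, i.e. the constant value D³φ_M^i[t_j, t_j, t_j], equals −6/|e_j|³ if i = j and equals 0 otherwise. -/

import Mathlib

noncomputable section
open MeasureTheory

namespace PaperStmt

/-- Euclidean dot product on `ℝ²`. -/
def dotp (v w : ℝ × ℝ) : ℝ := v.1 * w.1 + v.2 * w.2

/-- Euclidean length on `ℝ²`. -/
def len (v : ℝ × ℝ) : ℝ := Real.sqrt (v.1 ^ 2 + v.2 ^ 2)

/-- Cross product (determinant) of two planar vectors. -/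
def crossp (v w : ℝ × ℝ) : ℝ := v.1 * w.2 - v.2 * w.1

/-- The vertices `p 0, p 1, p 2` form a nondegenerate triangle listed counterclockwise. -/
def Ccw (p : Fin 3 → ℝ × ℝ) : Prop := 0 < crossp (p 1 - p 0) (p 2 - p 0)

/-- Vector of the edge `e_i` opposite vertex `p i`, oriented counterclockwise
(from `p (i+1)` to `p (i−1)`). -/
def edgeVec (p : Fin 3 → ℝ × ℝ) (i : Fin 3) : ℝ × ℝ := p (i - 1) - p (i + 1)

/-- Length `|e_i|` of the edge opposite vertex `p i`. -/
def elen (p : Fin 3 → ℝ × ℝ) (i : Fin 3) : ℝ := len (edgeVec p i)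

/-- Unit tangent `t_i = (p_{i−1} − p_{i+1})/|e_i|` of edge `e_i`. -/
def tvec (p : Fin 3 → ℝ × ℝ) (i : Fin 3) : ℝ × ℝ := (elen p i)⁻¹ • edgeVec p i

/-- Outward unit normal `n_i` of edge `e_i` (clockwise rotation of the tangent,
which points outward for a counterclockwise triangle). -/
def nvec (p : Fin 3 → ℝ × ℝ) (i : Fin 3) : ℝ × ℝ := ((tvec p i).2, -(tvec p i).1)

/-- Interior angle `θ_i` of the triangle at the vertex `p i`. -/
def angleAt (p : Fin 3 → ℝ × ℝ) (i : Fin 3) : ℝ :=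
  Real.arccos (dotp (p (i + 1) - p i) (p (i - 1) - p i) /
    (len (p (i + 1) - p i) * len (p (i - 1) - p i)))

/-- Outer product `v wᵀ` of two planar (column) vectors, as a `2 × 2` matrix. -/
def outerProd (v w : ℝ × ℝ) : Matrix (Fin 2) (Fin 2) ℝ :=
  !![v.1 * w.1, v.1 * w.2; v.2 * w.1, v.2 * w.2]

/-- Basis matrices `φ_HHJ^i = −(1/(2 sin θ_{i−1} sin θ_{i+1})) (t_{i−1} t_{i+1}ᵀ + t_{i+1} t_{i−1}ᵀ)`
of the lowest-order Hellan–Herrmann–Johnson element. -/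
def phiHHJ (p : Fin 3 → ℝ × ℝ) (i : Fin 3) : Matrix (Fin 2) (Fin 2) ℝ :=
  (-(2 * Real.sin (angleAt p (i - 1)) * Real.sin (angleAt p (i + 1)))⁻¹) •
    (outerProd (tvec p (i - 1)) (tvec p (i + 1)) + outerProd (tvec p (i + 1)) (tvec p (i - 1)))

/-- The quadratic form `vᵀ τ v` of a `2 × 2` matrix on a planar vector. -/
def qf (τ : Matrix (Fin 2) (Fin 2) ℝ) (v : ℝ × ℝ) : ℝ :=
  v.1 * (τ 0 0 * v.1 + τ 0 1 * v.2) + v.2 * (τ 1 0 * v.1 + τ 1 1 * v.2)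

end PaperStmt

namespace PaperStmt

/-- Directional derivative of `f` along `v`. -/
def dderiv (v : ℝ × ℝ) (f : ℝ × ℝ → ℝ) : ℝ × ℝ → ℝ := fun x => fderiv ℝ f x v

/-- Second directional derivative `D²f[u, v]`. -/
def d2 (u v : ℝ × ℝ) (f : ℝ × ℝ → ℝ) : ℝ × ℝ → ℝ := dderiv u (dderiv v f)

/-- Third directional derivative `D³f[u, v, w]`. -/
def d3 (u v w : ℝ × ℝ) (f : ℝ × ℝ → ℝ) : ℝ × ℝ → ℝ := dderiv u (dderiv v (dderiv w f))

/-- `ψ` is the family of barycentric coordinates of the triangle with vertices `p`: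
affine functions with `ψ i (p j) = δ_{ij}`. -/
def IsBarycentric (p : Fin 3 → ℝ × ℝ) (ψ : Fin 3 → ℝ × ℝ → ℝ) : Prop :=
  (∀ i : Fin 3, ∃ a b c : ℝ, ∀ x : ℝ × ℝ, ψ i x = a * x.1 + b * x.2 + c) ∧
  (∀ i j : Fin 3, ψ i (p j) = if i = j then 1 else 0)

/-- Morley bubble `φ_M^i = ψ_{i−1}² ψ_{i+1}` for `i = 1, 2, 3`. -/
def phiM3 (ψ : Fin 3 → ℝ × ℝ → ℝ) (i : Fin 3) : ℝ × ℝ → ℝ :=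
  fun x => (ψ (i - 1) x) ^ 2 * ψ (i + 1) x

/-- Morley bubble `φ_M^4 = ψ₁ ψ₂ ψ₃`. -/
def phiM4 (ψ : Fin 3 → ℝ × ℝ → ℝ) : ℝ × ℝ → ℝ :=
  fun x => ψ 0 x * ψ 1 x * ψ 2 x

/-- The four Morley bubbles `φ_M^1, φ_M^2, φ_M^3, φ_M^4`. -/
def phiM (ψ : Fin 3 → ℝ × ℝ → ℝ) : Fin 4 → ℝ × ℝ → ℝ :=
  ![phiM3 ψ 0, phiM3 ψ 1, phiM3 ψ 2, phiM4 ψ]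

end PaperStmt

/-!
Each barycentric coordinate `ψ k` is affine, so its derivative along `t_j` is the constant
`(ψ k (p (j-1)) - ψ k (p (j+1))) / |e_j| = (δ_{k,j-1} - δ_{k,j+1}) / |e_j|`, and the third
derivative along `v` of a product of three affine functions is six times the product of their
slopes along `v`. For `φ_M^j = ψ_{j-1}² ψ_{j+1}` the slopes are `1/|e_j|, 1/|e_j|, -1/|e_j|`;
every other bubble has the factor `ψ_j`, which is constant along `e_j`.
-/
namespace PaperStmt

def IsAffine (f : ℝ × ℝ → ℝ) : Prop :=
  ∃ a b c : ℝ, ∀ x : ℝ × ℝ, f x = a * x.1 + b * x.2 + c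

section DirectionalDerivative

variable {f g : ℝ × ℝ → ℝ}

lemma dderiv_smul_direction (c : ℝ) (v : ℝ × ℝ) (f : ℝ × ℝ → ℝ) (x : ℝ × ℝ) :
    dderiv (c • v) f x = c * dderiv v f x := by
  simp [dderiv]

lemma dderiv_add (hf : Differentiable ℝ f) (hg : Differentiable ℝ g) (v x : ℝ × ℝ) :
    dderiv v (fun y => f y + g y) x = dderiv v f x + dderiv v g x := by
  simp [dderiv, fderiv_fun_add (hf x) (hg x)]

lemma dderiv_mul (hf : Differentiable ℝ f) (hg : Differentiable ℝ g) (v x : ℝ × ℝ) :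
    dderiv v (fun y => f y * g y) x = dderiv v f x * g x + f x * dderiv v g x := by
  simp [dderiv, fderiv_fun_mul (hf x) (hg x)]
  ring

lemma dderiv_const_mul (hf : Differentiable ℝ f) (c : ℝ) (v x : ℝ × ℝ) :
    dderiv v (fun y => c * f y) x = c * dderiv v f x := by
  simp [dderiv, fderiv_const_mul (hf x) c]

lemma IsAffine.differentiable (hf : IsAffine f) : Differentiable ℝ f := by
  obtain ⟨a, b, c, hf⟩ := hf
  rw [funext hf]
  fun_prop

lemma IsAffine.dderiv_eq_sub (hf : IsAffine f) (v x y : ℝ × ℝ) :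
    dderiv v f x = f (y + v) - f y := by
  obtain ⟨a, b, c, hf⟩ := hf
  rw [funext hf, dderiv, fderiv_add_const, fderiv_fun_add (by fun_prop) (by fun_prop),
    fderiv_const_mul (by fun_prop), fderiv_const_mul (by fun_prop)]
  simp [fderiv_fst, fderiv_snd]
  ring

lemma d3_mul_mul_of_isAffine {h : ℝ × ℝ → ℝ} (hf : IsAffine f) (hg : IsAffine g)
    (hh : IsAffine h) (v x : ℝ × ℝ) :
    d3 v v v (fun y => f y * g y * h y) x =
      6 * (dderiv v f x * dderiv v g x * dderiv v h x) := by
  have slope_const : ∀ {u}, IsAffine u → ∀ y, dderiv v u y = dderiv v u x := fun hu y => by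
    rw [hu.dderiv_eq_sub v y 0, hu.dderiv_eq_sub v x 0]
  set a := dderiv v f x
  set b := dderiv v g x
  set c := dderiv v h x
  have hf' := hf.differentiable
  have hg' := hg.differentiable
  have hh' := hh.differentiable
  have once : dderiv v (fun y => f y * g y * h y) =
      fun y => a * (g y * h y) + b * (f y * h y) + c * (f y * g y) := by
    funext y
    rw [dderiv_mul (by fun_prop) hh', dderiv_mul hf' hg', slope_const hf, slope_const hg,
      slope_const hh]
    ring
  have twice : dderiv v (fun y => a * (g y * h y) + b * (f y * h y) + c * (f y * g y)) =
      fun y => 2 * (a * b) * h y + 2 * (a * c) * g y + 2 * (b * c) * f y := by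
    funext y
    rw [dderiv_add (by fun_prop) (by fun_prop), dderiv_add (by fun_prop) (by fun_prop),
      dderiv_const_mul (by fun_prop), dderiv_const_mul (by fun_prop),
      dderiv_const_mul (by fun_prop), dderiv_mul hg' hh', dderiv_mul hf' hh', dderiv_mul hf' hg',
      slope_const hf, slope_const hg, slope_const hh]
    ring
  rw [d3, once, twice, dderiv_add (by fun_prop) (by fun_prop),
    dderiv_add (by fun_prop) (by fun_prop), dderiv_const_mul hh', dderiv_const_mul hg',
    dderiv_const_mul hf']
  ring

end DirectionalDerivative

lemma IsBarycentric.dderiv_tvec {p : Fin 3 → ℝ × ℝ} {ψ : Fin 3 → ℝ × ℝ → ℝ}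
    (hψ : IsBarycentric p ψ) (k j : Fin 3) (x : ℝ × ℝ) :
    dderiv (tvec p j) (ψ k) x =
      (elen p j)⁻¹ * ((if k = j - 1 then 1 else 0) - if k = j + 1 then 1 else 0) := by
  rw [tvec, dderiv_smul_direction, IsAffine.dderiv_eq_sub (hψ.1 k) _ x (p (j + 1)), edgeVec,
    add_sub_cancel, hψ.2, hψ.2]

lemma phiM3_eq (ψ : Fin 3 → ℝ × ℝ → ℝ) (i : Fin 3) :
    phiM3 ψ i = fun y => ψ (i - 1) y * ψ (i - 1) y * ψ (i + 1) y := by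
  funext y
  exact congrArg (· * ψ (i + 1) y) (sq _)

lemma phiM4_eq (ψ : Fin 3 → ℝ × ℝ → ℝ) :
    phiM4 ψ = fun y => ψ 0 y * ψ 1 y * ψ 2 y :=
  rfl

end PaperStmt

open PaperStmt in
theorem morley_bubble_third_deriv_tangent_general
    (p : Fin 3 → ℝ × ℝ)
    (ψ : Fin 3 → ℝ × ℝ → ℝ) (hψ : IsBarycentric p ψ)
    (i : Fin 4) (j : Fin 3) :
    ∀ x : ℝ × ℝ,
      d3 (tvec p j) (tvec p j) (tvec p j) (phiM ψ i) x =
        if (i : ℕ) = (j : ℕ) then -6 / elen p j ^ 3 else 0 := by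
  intro x
  have triple : ∀ k₁ k₂ k₃ : Fin 3,
      d3 (tvec p j) (tvec p j) (tvec p j) (fun y => ψ k₁ y * ψ k₂ y * ψ k₃ y) x =
        6 * (dderiv (tvec p j) (ψ k₁) x * dderiv (tvec p j) (ψ k₂) x *
          dderiv (tvec p j) (ψ k₃) x) :=
    fun k₁ k₂ k₃ => d3_mul_mul_of_isAffine (hψ.1 k₁) (hψ.1 k₂) (hψ.1 k₃) _ x
  have slope := fun k => hψ.dderiv_tvec k j x
  fin_cases i <;>
    simp only [phiM, Fin.reduceFinMk, Matrix.cons_val, phiM3_eq, phiM4_eq] <;> rw [triple] <;>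
    simp only [slope] <;> fin_cases j <;> simp +decide <;> ring

open PaperStmt in
/-- The third directional derivative of the Morley bubble `φ_M^i` along the tangent `t_j`
is the constant `−6/|e_j|³` if `i = j` and `0` otherwise. -/
theorem morley_bubble_third_deriv_tangent
    (p : Fin 3 → ℝ × ℝ) (hp : Ccw p)
    (ψ : Fin 3 → ℝ × ℝ → ℝ) (hψ : IsBarycentric p ψ)
    (i : Fin 4) (j : Fin 3) :
    ∀ x : ℝ × ℝ,
      d3 (tvec p j) (tvec p j) (tvec p j) (phiM ψ i) x =
        if (i : ℕ) = (j : ℕ) then -6 / elen p j ^ 3 else 0 :=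
  morley_bubble_third_deriv_tangent_general p ψ hψ i j
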